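/- Let 0 < q < 1, let m be a nonnegative integer and let 0 ≤ α < 1. Let f = h + conj(g) with h(z) = z − Σ_{u=2}^∞ |a_u| z^u and g(z) = Σ_{u=1}^∞ |b_u| z^u, and suppose Σ_{u=2}^∞ [u]_q^m (|a_u| + |b_u|) ≤ 1 − α − |b_1| (i.e., f ∈ \bar{S}_H^q(m, α, u)). Then for every z with |z| = r < 1, |f(z)| ≥ (1 − |b_1|) r − (1/[2]_q^m)(1 − α − |b_1|) r². -/

import Mathlib

open Metric Complex

/-!
On `|z| = r < 1` write `f(z) = z - A(z) + conj (g(z))` with `A(z) = Σ_{u≥2} |a_u| z^u`, so that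
`|f(z)| ≥ r - |A(z)| - |g(z)|`, where `|A(z)| ≤ r² Σ_{u≥2} |a_u|` and
`|g(z)| ≤ |b₁| r + r² Σ_{u≥2} |b_u|`. Since `[u]_q` increases in `u`, the coefficient condition
gives `Σ_{u≥2} (|a_u| + |b_u|) ≤ (1 - α - |b₁|) / [2]_q^m`.
-/

noncomputable def qInt (q : ℝ) (u : ℕ) : ℝ := (1 - q ^ u) / (1 - q)

open Finset in
theorem qInt_eq_geom_sum {q : ℝ} (hq : q ≠ 1) (u : ℕ) : qInt q u = ∑ i ∈ range u, q ^ i := by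
  rw [geom_sum_eq hq, qInt, ← neg_div_neg_eq, neg_sub, neg_sub]

theorem qInt_mono {q : ℝ} (hq0 : 0 ≤ q) (hq1 : q ≠ 1) : Monotone (qInt q) := fun u v huv => by
  simp only [qInt_eq_geom_sum hq1]
  exact Finset.sum_le_sum_of_subset_of_nonneg (Finset.range_mono huv)
    fun i _ _ => pow_nonneg hq0 i

theorem one_le_qInt {q : ℝ} (hq0 : 0 ≤ q) (hq1 : q ≠ 1) {u : ℕ} (hu : 1 ≤ u) : 1 ≤ qInt q u := by
  calc (1 : ℝ) = qInt q 1 := by simp [qInt_eq_geom_sum hq1]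
    _ ≤ qInt q u := qInt_mono hq0 hq1 hu

theorem summable_and_tsum_le_div_of_weighted {ι : Type*} {c w : ι → ℝ} {W B : ℝ} (hW : 0 < W)
    (hc : ∀ i, 0 ≤ c i) (hw : ∀ i, W ≤ w i) (hs : Summable fun i => w i * c i)
    (hB : ∑' i, w i * c i ≤ B) : Summable c ∧ ∑' i, c i ≤ B / W := by
  have hWc : ∀ i, W * c i ≤ w i * c i := fun i => mul_le_mul_of_nonneg_right (hw i) (hc i)
  have hsWc : Summable fun i => W * c i :=
    hs.of_nonneg_of_le (fun i => mul_nonneg hW.le (hc i)) hWc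
  have hsc : Summable c := (summable_mul_left_iff hW.ne').mp hsWc
  refine ⟨hsc, (le_div_iff₀ hW).mpr ?_⟩
  calc (∑' i, c i) * W = ∑' i, W * c i := by rw [tsum_mul_left, mul_comm]
    _ ≤ ∑' i, w i * c i := hsWc.tsum_le_tsum hWc hs
    _ ≤ B := hB

theorem norm_tsum_mul_pow_add_le {𝕜 : Type*} [NormedField 𝕜] {c : ℕ → 𝕜}
    (hc : Summable fun u => ‖c u‖) {z : 𝕜} (hz : ‖z‖ ≤ 1) (k : ℕ) :
    ‖∑' u, c u * z ^ (u + k)‖ ≤ ‖z‖ ^ k * ∑' u, ‖c u‖ := by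
  have hterm : ∀ u, ‖c u * z ^ (u + k)‖ ≤ ‖c u‖ * ‖z‖ ^ k := fun u => by
    rw [norm_mul, norm_pow, pow_add]
    gcongr
    exact mul_le_of_le_one_left (by positivity) (pow_le_one₀ (norm_nonneg z) hz)
  have hsk : Summable fun u => ‖c u‖ * ‖z‖ ^ k := hc.mul_right _
  calc ‖∑' u, c u * z ^ (u + k)‖ ≤ ∑' u, ‖c u * z ^ (u + k)‖ :=
        norm_tsum_le_tsum_norm (hsk.of_nonneg_of_le (fun _ => norm_nonneg _) hterm)
    _ ≤ ∑' u, ‖c u‖ * ‖z‖ ^ k :=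
        (hsk.of_nonneg_of_le (fun _ => norm_nonneg _) hterm).tsum_le_tsum hterm hsk
    _ = ‖z‖ ^ k * ∑' u, ‖c u‖ := by rw [tsum_mul_right, mul_comm]

theorem tsum_mul_pow_succ_eq {𝕜 : Type*} [NormedField 𝕜] [CompleteSpace 𝕜] {c : ℕ → 𝕜}
    (hc : Summable fun u => ‖c u‖) {z : 𝕜} (hz : ‖z‖ ≤ 1) :
    ∑' u, c u * z ^ (u + 1) = c 0 * z + ∑' u, c (u + 1) * z ^ (u + 2) := by
  have hs : Summable fun u => c u * z ^ (u + 1) := by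
    refine Summable.of_norm_bounded hc fun u => ?_
    rw [norm_mul, norm_pow]
    exact mul_le_of_le_one_right (norm_nonneg _) (pow_le_one₀ (norm_nonneg z) hz)
  simpa using hs.tsum_eq_zero_add

theorem norm_tsum_mul_pow_succ_le {𝕜 : Type*} [NormedField 𝕜] [CompleteSpace 𝕜] {c : ℕ → 𝕜}
    (hc : Summable fun u => ‖c u‖) {z : 𝕜} (hz : ‖z‖ ≤ 1) :
    ‖∑' u, c u * z ^ (u + 1)‖ ≤ ‖c 0‖ * ‖z‖ + ‖z‖ ^ 2 * ∑' u, ‖c (u + 1)‖ := by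
  have htail := norm_tsum_mul_pow_add_le (c := fun u => c (u + 1))
    ((summable_nat_add_iff 1).mpr hc) hz 2
  rw [tsum_mul_pow_succ_eq hc hz, ← norm_mul]
  exact (norm_add_le _ _).trans (add_le_add_right htail _)

theorem norm_sub_norm_sub_norm_le_norm_sub_add_conj (z w v : ℂ) :
    ‖z‖ - ‖w‖ - ‖v‖ ≤ ‖z - w + (starRingEnd ℂ) v‖ := by
  have := norm_sub_le_norm_add (z - w) ((starRingEnd ℂ) v)
  rw [Complex.norm_conj] at this
  linarith [norm_sub_norm_le z w]

theorem growth_lower_bound_general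
    (q α : ℝ) (hq0 : 0 < q) (hq1 : q < 1) (m : ℕ)
    (a b : ℕ → ℂ)
    (h g f : ℂ → ℂ)
    (hh : ∀ z ∈ ball (0 : ℂ) 1,
      h z = z - ∑' u : ℕ, ((‖a (u + 2)‖ : ℝ) : ℂ) * z ^ (u + 2))
    (hg : ∀ z ∈ ball (0 : ℂ) 1,
      g z = ∑' u : ℕ, ((‖b (u + 1)‖ : ℝ) : ℂ) * z ^ (u + 1))
    (hf : ∀ z ∈ ball (0 : ℂ) 1, f z = h z + (starRingEnd ℂ) (g z))
    (hs : Summable fun u : ℕ =>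
      qInt q (u + 2) ^ m * (‖a (u + 2)‖ + ‖b (u + 2)‖))
    (hcoef : (∑' u : ℕ,
        qInt q (u + 2) ^ m * (‖a (u + 2)‖ + ‖b (u + 2)‖)) ≤
      1 - α - ‖b 1‖) :
    ∀ z : ℂ, ‖z‖ < 1 →
      (1 - ‖b 1‖) * ‖z‖ -
        1 / qInt q 2 ^ m * (1 - α - ‖b 1‖) * ‖z‖ ^ 2 ≤
      ‖f z‖ := by
  intro z hz
  have hzb : z ∈ ball (0 : ℂ) 1 := mem_ball_zero_iff.mpr hz
  have hq2 : 1 ≤ qInt q 2 := one_le_qInt hq0.le hq1.ne (by norm_num)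
  obtain ⟨hsab, htail⟩ := summable_and_tsum_le_div_of_weighted (pow_pos (by linarith) m)
    (fun u => by positivity)
    (fun u => pow_le_pow_left₀ (by linarith) (qInt_mono hq0.le hq1.ne (by omega)) m) hs hcoef
  have hsa : Summable fun u => ‖a (u + 2)‖ :=
    hsab.of_nonneg_of_le (fun _ => norm_nonneg _) fun u => le_add_of_nonneg_right (norm_nonneg _)
  have hsb : Summable fun u => ‖b (u + 2)‖ :=
    hsab.of_nonneg_of_le (fun _ => norm_nonneg _) fun u => le_add_of_nonneg_left (norm_nonneg _)
  have hnorm (x : ℂ) : ‖((‖x‖ : ℝ) : ℂ)‖ = ‖x‖ := by rw [Complex.norm_real, norm_norm]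
  have hA := norm_tsum_mul_pow_add_le (𝕜 := ℂ) (c := fun u => ((‖a (u + 2)‖ : ℝ) : ℂ))
    (by simpa only [hnorm] using hsa) hz.le 2
  have hsb1 : Summable fun u => ‖b (u + 1)‖ := (summable_nat_add_iff 1).mp hsb
  have hG := norm_tsum_mul_pow_succ_le (𝕜 := ℂ) (c := fun u => ((‖b (u + 1)‖ : ℝ) : ℂ))
    (by simpa only [hnorm] using hsb1) hz.le
  simp only [hnorm, zero_add, add_assoc, Nat.reduceAdd] at hA hG
  rw [hf z hzb, hh z hzb, hg z hzb]
  refine le_trans ?_ (norm_sub_norm_sub_norm_le_norm_sub_add_conj _ _ _)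
  rw [Summable.tsum_add hsa hsb] at htail
  have hr2 := mul_le_mul_of_nonneg_left htail (sq_nonneg ‖z‖)
  have hform : 1 / qInt q 2 ^ m * (1 - α - ‖b 1‖) * ‖z‖ ^ 2 =
      ‖z‖ ^ 2 * ((1 - α - ‖b 1‖) / qInt q 2 ^ m) := by ring
  linarith

/-- Growth (lower bound): if `f = h + conj g` has negative coefficients and
`Σ_{u≥2} [u]_q^m (|a_u| + |b_u|) ≤ 1 - α - |b_1|`, then for `|z| = r < 1`,
`|f(z)| ≥ (1 - |b_1|) r - (1/[2]_q^m)(1 - α - |b_1|) r²`. -/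
theorem growth_lower_bound
    (q α : ℝ) (hq0 : 0 < q) (hq1 : q < 1) (m : ℕ)
    (hα0 : 0 ≤ α) (hα1 : α < 1)
    (a b : ℕ → ℂ)
    (h g f : ℂ → ℂ)
    (hh : ∀ z ∈ ball (0 : ℂ) 1,
      h z = z - ∑' u : ℕ, ((‖a (u + 2)‖ : ℝ) : ℂ) * z ^ (u + 2))
    (hg : ∀ z ∈ ball (0 : ℂ) 1,
      g z = ∑' u : ℕ, ((‖b (u + 1)‖ : ℝ) : ℂ) * z ^ (u + 1))
    (hf : ∀ z ∈ ball (0 : ℂ) 1, f z = h z + (starRingEnd ℂ) (g z))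
    (hs : Summable fun u : ℕ =>
      qInt q (u + 2) ^ m * (‖a (u + 2)‖ + ‖b (u + 2)‖))
    (hcoef : (∑' u : ℕ,
        qInt q (u + 2) ^ m * (‖a (u + 2)‖ + ‖b (u + 2)‖)) ≤
      1 - α - ‖b 1‖) :
    ∀ z : ℂ, ‖z‖ < 1 →
      (1 - ‖b 1‖) * ‖z‖ -
        1 / qInt q 2 ^ m * (1 - α - ‖b 1‖) * ‖z‖ ^ 2 ≤
      ‖f z‖ :=
  growth_lower_bound_general q α hq0 hq1 m a b h g f hh hg hf hs hcoef
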